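/- Let T > 0 and let M : [0,T) → ℝ be locally Lipschitz with M(0) < 0 and M'(t) ≤ -(3/2) M(t)² for almost every t ∈ (0,T). Then M(t) < 0 for all t ∈ [0,T), 1/M(t) ≥ 1/M(0) + (3/2) t for all t ∈ [0,T), and consequently T ≤ 2/(3|M(0)|). -/

import Mathlib

/-!
A Lipschitz function is absolutely continuous, hence the integral of its a.e. derivative. Since
`M' ≤ -(3/2) M² ≤ 0` a.e., `M` is nonincreasing, so `M ≤ M 0 < 0`. Bounded away from zero, `1/M`
is again Lipschitz, and `(1/M)' = -M'/M² ≥ 3/2` a.e.; integrating gives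
`1/M t ≥ 1/M 0 + 3t/2`, whose left side is negative, so `t < 2/(3|M 0|)` for every `t < T`.
-/

open MeasureTheory Set
open scoped NNReal

theorem AbsolutelyContinuousOnInterval.sub_le_mul_of_ae_hasDerivAt_le {f : ℝ → ℝ} {a b C : ℝ}
    (hf : AbsolutelyContinuousOnInterval f a b) (hab : a ≤ b)
    (hf' : ∀ᵐ x, x ∈ Ioo a b → ∃ d, HasDerivAt f d x ∧ d ≤ C) :
    f b - f a ≤ C * (b - a) := by
  have hderiv : deriv f ≤ᵐ[volume.restrict (Icc a b)] fun _ ↦ C := by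
    rw [← Measure.restrict_congr_set Ioo_ae_eq_Icc, Filter.EventuallyLE,
      ae_restrict_iff' measurableSet_Ioo]
    filter_upwards [hf'] with x hx hxab
    obtain ⟨d, hd, hdC⟩ := hx hxab
    exact hd.deriv ▸ hdC
  calc f b - f a = ∫ x in a..b, deriv f x := hf.integral_deriv_eq_sub.symm
    _ ≤ ∫ _ in a..b, C :=
      intervalIntegral.integral_mono_ae_restrict hab hf.intervalIntegrable_deriv
        intervalIntegrable_const hderiv
    _ = C * (b - a) := by simp [mul_comm]

theorem lipschitzOnWith_inv_of_le_norm {𝕜 : Type*} [NormedDivisionRing 𝕜] {m : ℝ≥0}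
    (hm : 0 < m) : LipschitzOnWith (m ^ 2)⁻¹ (Inv.inv : 𝕜 → 𝕜) {x | (m : ℝ) ≤ ‖x‖} := by
  refine LipschitzOnWith.of_dist_le_mul fun x hx y hy ↦ ?_
  have hx0 : x ≠ 0 := norm_pos_iff.1 (lt_of_lt_of_le hm hx)
  have hy0 : y ≠ 0 := norm_pos_iff.1 (lt_of_lt_of_le hm hy)
  rw [dist_inv_inv₀ hx0 hy0, NNReal.coe_inv, NNReal.coe_pow, div_eq_inv_mul]
  gcongr
  rw [sq]
  exact mul_le_mul hx hy m.2 (norm_nonneg x)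

section Riccati

variable {M : ℝ → ℝ} {k t : ℝ} {L : ℝ≥0}

theorem ae_hasDerivAt_le_neg_mul_sq (hL : LipschitzOnWith L M (Icc 0 t))
    (h : ∀ᵐ s, s ∈ Ioo 0 t → ∀ d, HasDerivAt M d s → d ≤ -k * M s ^ 2) :
    ∀ᵐ s, s ∈ Ioo 0 t → ∃ d, HasDerivAt M d s ∧ d ≤ -k * M s ^ 2 := by
  filter_upwards [hL.ae_differentiableWithinAt_of_mem_real, h] with s hdiff hs hst
  have hM : DifferentiableAt ℝ M s :=
    (hdiff (Ioo_subset_Icc_self hst)).differentiableAt (Icc_mem_nhds hst.1 hst.2)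
  exact ⟨_, hM.hasDerivAt, hs hst _ hM.hasDerivAt⟩

theorem le_apply_zero_of_deriv_le_neg_mul_sq (hk : 0 ≤ k) (ht : 0 ≤ t)
    (hL : LipschitzOnWith L M (Icc 0 t))
    (h : ∀ᵐ s, s ∈ Ioo 0 t → ∀ d, HasDerivAt M d s → d ≤ -k * M s ^ 2) :
    M t ≤ M 0 := by
  have hAC : AbsolutelyContinuousOnInterval M 0 t :=
    (uIcc_of_le ht ▸ hL).absolutelyContinuousOnInterval
  have hmono : ∀ᵐ s, s ∈ Ioo 0 t → ∃ d, HasDerivAt M d s ∧ d ≤ 0 := by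
    filter_upwards [ae_hasDerivAt_le_neg_mul_sq hL h] with s hs hst
    obtain ⟨d, hd, hdk⟩ := hs hst
    exact ⟨d, hd, hdk.trans (mul_nonpos_of_nonpos_of_nonneg (neg_nonpos.2 hk) (sq_nonneg _))⟩
  simpa using hAC.sub_le_mul_of_ae_hasDerivAt_le ht hmono

theorem inv_add_mul_le_inv_of_deriv_le_neg_mul_sq (hk : 0 ≤ k) (ht : 0 ≤ t)
    (hL : LipschitzOnWith L M (Icc 0 t))
    (h : ∀ᵐ s, s ∈ Ioo 0 t → ∀ d, HasDerivAt M d s → d ≤ -k * M s ^ 2) (hM0 : M 0 < 0) :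
    (M 0)⁻¹ + k * t ≤ (M t)⁻¹ := by
  have hle : ∀ s ∈ Icc 0 t, M s ≤ M 0 := fun s hs ↦
    le_apply_zero_of_deriv_le_neg_mul_sq hk hs.1 (hL.mono (Icc_subset_Icc_right hs.2))
      (h.mono fun x hx hxs ↦ hx (Ioo_subset_Ioo_right hs.2 hxs))
  have hmaps : MapsTo M (Icc 0 t) {x | ((-M 0).toNNReal : ℝ) ≤ ‖x‖} := fun s hs ↦ by
    have hMs := hle s hs
    show ((-M 0).toNNReal : ℝ) ≤ ‖M s‖
    rw [Real.coe_toNNReal _ (neg_nonneg.2 hM0.le), Real.norm_of_nonpos (hMs.trans hM0.le)]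
    linarith
  have hAC : AbsolutelyContinuousOnInterval (fun s ↦ -(M s)⁻¹) 0 t :=
    (uIcc_of_le ht ▸ ((lipschitzOnWith_inv_of_le_norm (by simpa using hM0)).comp hL
      hmaps)).absolutelyContinuousOnInterval.neg
  have hderiv : ∀ᵐ s, s ∈ Ioo 0 t → ∃ d, HasDerivAt (fun s ↦ -(M s)⁻¹) d s ∧ d ≤ -k := by
    filter_upwards [ae_hasDerivAt_le_neg_mul_sq hL h] with s hs hst
    obtain ⟨d, hd, hdk⟩ := hs hst
    have hMs : M s < 0 := (hle s (Ioo_subset_Icc_self hst)).trans_lt hM0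
    refine ⟨_, (hd.inv hMs.ne).neg, ?_⟩
    rw [neg_div, neg_neg, div_le_iff₀ (sq_pos_of_neg hMs)]
    linarith
  have := hAC.sub_le_mul_of_ae_hasDerivAt_le ht hderiv
  linarith

end Riccati

theorem riccati_blowup (T : ℝ) (M : ℝ → ℝ)
    (hM : ∀ c : ℝ, c < T → ∃ L : NNReal, LipschitzOnWith L M (Set.Icc 0 c))
    (hM0 : M 0 < 0)
    (hineq : ∀ᵐ t ∂(volume : Measure ℝ), t ∈ Set.Ioo (0 : ℝ) T →
      ∀ d : ℝ, HasDerivAt M d t → d ≤ -(3 / 2) * (M t) ^ 2) :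
    (∀ t ∈ Set.Ico (0 : ℝ) T, M t < 0) ∧
    (∀ t ∈ Set.Ico (0 : ℝ) T, 1 / M t ≥ 1 / M 0 + (3 / 2) * t) ∧
    T ≤ 2 / (3 * |M 0|) := by
  have hbounds : ∀ t ∈ Ico (0 : ℝ) T, M t ≤ M 0 ∧ (M 0)⁻¹ + 3 / 2 * t ≤ (M t)⁻¹ := by
    intro t ht
    obtain ⟨L, hL⟩ := hM t ht.2
    have h : ∀ᵐ s, s ∈ Ioo 0 t → ∀ d, HasDerivAt M d s → d ≤ -(3 / 2) * M s ^ 2 :=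
      hineq.mono fun s hs hst ↦ hs ⟨hst.1, hst.2.trans ht.2⟩
    exact ⟨le_apply_zero_of_deriv_le_neg_mul_sq (by norm_num) ht.1 hL h,
      inv_add_mul_le_inv_of_deriv_le_neg_mul_sq (by norm_num) ht.1 hL h hM0⟩
  have hneg : ∀ t ∈ Ico (0 : ℝ) T, M t < 0 := fun t ht ↦ (hbounds t ht).1.trans_lt hM0
  have hlt : ∀ t ∈ Ico (0 : ℝ) T, t < 2 / (3 * |M 0|) := by
    intro t ht
    have hinv := (hbounds t ht).2.trans_lt (inv_lt_zero.2 (hneg t ht))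
    rw [abs_of_neg hM0, lt_div_iff₀ (by linarith)]
    nlinarith [mul_inv_cancel₀ hM0.ne]
  refine ⟨hneg, fun t ht ↦ by simpa only [one_div] using (hbounds t ht).2, ?_⟩
  exact le_of_not_gt fun hB ↦ (hlt _ ⟨by positivity, hB⟩).false
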